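/- (Robertson–Heisenberg uncertainty relation for finite-level systems.) Let A, B, C be Hermitian N×N complex matrices with A·B − B·A = i • C, and let ψ ∈ ℂ^N be a unit vector. Then Δ_ψ(A) · Δ_ψ(B) ≥ (1/2) · |⟨ψ, C *ᵥ ψ⟩|. -/

import Mathlib

/-- Expectation of an observable `M` in the state `ψ`: `E_ψ(M) = ⟨ψ, M *ᵥ ψ⟩`
(for Hermitian `M` this inner ℂ product is real, and we take its real part). -/
noncomputable def expVal {N : ℕ} (ψ : EuclideanSpace ℂ (Fin N))
    (M : Matrix (Fin N) (Fin N) ℂ) : ℝ :=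
  (inner ℂ ψ (Matrix.toEuclideanLin M ψ) : ℂ).re

/-- Variance: `Var_ψ(M) = E_ψ(M·M) − E_ψ(M)²`. -/
noncomputable def varVal {N : ℕ} (ψ : EuclideanSpace ℂ (Fin N))
    (M : Matrix (Fin N) (Fin N) ℂ) : ℝ :=
  expVal ψ (M * M) - (expVal ψ M) ^ 2

/-- Standard deviation: `Δ_ψ(M) = √(Var_ψ(M))`. -/
noncomputable def stdDev {N : ℕ} (ψ : EuclideanSpace ℂ (Fin N))
    (M : Matrix (Fin N) (Fin N) ℂ) : ℝ :=
  Real.sqrt (varVal ψ M)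

lemma toEL_mul {N : ℕ} (A B : Matrix (Fin N) (Fin N) ℂ) (x : EuclideanSpace ℂ (Fin N)) :
    Matrix.toEuclideanLin (A * B) x = Matrix.toEuclideanLin A (Matrix.toEuclideanLin B x) := by
  simp [Matrix.toEuclideanLin_apply, Matrix.mulVec_mulVec]

lemma var_eq_sq {N : ℕ} (M : Matrix (Fin N) (Fin N) ℂ) (hM : M.IsHermitian)
    (ψ : EuclideanSpace ℂ (Fin N)) (hψ : ‖ψ‖ = 1) :
    varVal ψ M = ‖Matrix.toEuclideanLin M ψ - ((expVal ψ M : ℝ) : ℂ) • ψ‖ ^ 2 := by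
  have hs := Matrix.isHermitian_iff_isSymmetric.1 hM
  set T := Matrix.toEuclideanLin M with hT
  set a : ℝ := expVal ψ M with ha
  have hψψ : (inner ℂ ψ ψ : ℂ) = 1 := by
    rw [inner_self_eq_norm_sq_to_K, hψ]; norm_num
  have hre : (inner ℂ ψ (T ψ) : ℂ) = (a : ℝ) := by
    have hc : (starRingEnd ℂ) (inner ℂ ψ (T ψ)) = inner ℂ ψ (T ψ) := by
      rw [inner_conj_symm]; exact hs ψ ψ
    have h0 := Complex.conj_eq_iff_re.1 hc
    rw [ha]
    unfold expVal
    rw [← hT]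
    exact h0.symm
  have hre' : (inner ℂ (T ψ) ψ : ℂ) = (a : ℝ) := by rw [hs ψ ψ, hre]
  set φ : EuclideanSpace ℂ (Fin N) := T ψ - (a : ℂ) • ψ with hφ
  have h1 : expVal ψ (M * M) = (inner ℂ (T ψ) (T ψ) : ℂ).re := by
    rw [expVal]
    congr 1
    rw [toEL_mul, ← hT]
    exact (hs ψ (T ψ)).symm
  have h2 : (inner ℂ φ φ : ℂ) = inner ℂ (T ψ) (T ψ) - ((a : ℂ)) ^ 2 := by
    rw [hφ]
    simp only [inner_sub_left, inner_sub_right, inner_smul_left, inner_smul_right,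
      hre, hre', hψψ, Complex.conj_ofReal]
    ring
  have e1 : (inner ℂ φ φ : ℂ).re = ‖φ‖ ^ 2 := by
    rw [inner_self_eq_norm_sq_to_K]
    norm_cast
  have e2 : (((a : ℝ) : ℂ) ^ 2).re = a ^ 2 := by
    rw [← Complex.ofReal_pow, Complex.ofReal_re]
  have h4 := congrArg Complex.re h2
  rw [e1, Complex.sub_re, e2] at h4
  unfold varVal
  rw [← ha, h1, h4]

/-- **Robertson–Heisenberg uncertainty relation.** If `A, B, C` are
Hermitian with `A·B − B·A = i • C` and `ψ` is a unit vector, then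
`Δ_ψ(A) · Δ_ψ(B) ≥ (1/2) · |⟨ψ, C *ᵥ ψ⟩|`. -/
theorem uncertainty_relation {N : ℕ} (A B C : Matrix (Fin N) (Fin N) ℂ)
    (hA : A.IsHermitian) (hB : B.IsHermitian) (hC : C.IsHermitian)
    (h : A * B - B * A = Complex.I • C)
    (ψ : EuclideanSpace ℂ (Fin N)) (hψ : ‖ψ‖ = 1) :
    stdDev ψ A * stdDev ψ B ≥ (1 / 2) * ‖(inner ℂ ψ (Matrix.toEuclideanLin C ψ) : ℂ)‖ := by
  have hAs := Matrix.isHermitian_iff_isSymmetric.1 hA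
  have hBs := Matrix.isHermitian_iff_isSymmetric.1 hB
  set TA := Matrix.toEuclideanLin A with hTAe
  set TB := Matrix.toEuclideanLin B with hTBe
  set a : ℝ := expVal ψ A with ha
  set b : ℝ := expVal ψ B with hb
  have hψψ : (inner ℂ ψ ψ : ℂ) = 1 := by
    rw [inner_self_eq_norm_sq_to_K, hψ]; norm_num
  have hAre : (inner ℂ ψ (TA ψ) : ℂ) = (a : ℝ) := by
    have hc : (starRingEnd ℂ) (inner ℂ ψ (TA ψ)) = inner ℂ ψ (TA ψ) := by
      rw [inner_conj_symm]; exact hAs ψ ψ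
    have h0 := Complex.conj_eq_iff_re.1 hc
    rw [ha]
    unfold expVal
    rw [← hTAe]
    exact h0.symm
  have hBre : (inner ℂ ψ (TB ψ) : ℂ) = (b : ℝ) := by
    have hc : (starRingEnd ℂ) (inner ℂ ψ (TB ψ)) = inner ℂ ψ (TB ψ) := by
      rw [inner_conj_symm]; exact hBs ψ ψ
    have h0 := Complex.conj_eq_iff_re.1 hc
    rw [hb]
    unfold expVal
    rw [← hTBe]
    exact h0.symm
  set φA : EuclideanSpace ℂ (Fin N) := TA ψ - (a : ℂ) • ψ with hφA
  set φB : EuclideanSpace ℂ (Fin N) := TB ψ - (b : ℂ) • ψ with hφB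
  have hψφA : (inner ℂ ψ φA : ℂ) = 0 := by
    rw [hφA, inner_sub_right, inner_smul_right, hAre, hψψ]; ring
  have hψφB : (inner ℂ ψ φB : ℂ) = 0 := by
    rw [hφB, inner_sub_right, inner_smul_right, hBre, hψψ]; ring
  have hφAψ : (inner ℂ φA ψ : ℂ) = 0 := by
    rw [← inner_conj_symm, hψφA, map_zero]
  have hφBψ : (inner ℂ φB ψ : ℂ) = 0 := by
    rw [← inner_conj_symm, hψφB, map_zero]
  have hsA : stdDev ψ A = ‖φA‖ := by
    rw [stdDev, var_eq_sq A hA ψ hψ, Real.sqrt_sq (norm_nonneg _)]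
  have hsB : stdDev ψ B = ‖φB‖ := by
    rw [stdDev, var_eq_sq B hB ψ hψ, Real.sqrt_sq (norm_nonneg _)]
  set z : ℂ := inner ℂ φA φB with hz
  have hcomm : Complex.I * (inner ℂ ψ (Matrix.toEuclideanLin C ψ) : ℂ)
      = z - (starRingEnd ℂ) z := by
    have hIC : (inner ℂ ψ (Matrix.toEuclideanLin (A * B - B * A) ψ) : ℂ)
        = Complex.I * inner ℂ ψ (Matrix.toEuclideanLin C ψ) := by
      rw [h]; simp [inner_smul_right]
    have hAB : (inner ℂ ψ (Matrix.toEuclideanLin (A * B) ψ) : ℂ) = inner ℂ (TA ψ) (TB ψ) := by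
      rw [toEL_mul, ← hTAe, ← hTBe]; exact (hAs ψ (TB ψ)).symm
    have hBA : (inner ℂ ψ (Matrix.toEuclideanLin (B * A) ψ) : ℂ) = inner ℂ (TB ψ) (TA ψ) := by
      rw [toEL_mul, ← hTAe, ← hTBe]; exact (hBs ψ (TA ψ)).symm
    have hsub : (inner ℂ ψ (Matrix.toEuclideanLin (A * B - B * A) ψ) : ℂ)
        = inner ℂ (TA ψ) (TB ψ) - inner ℂ (TB ψ) (TA ψ) := by
      rw [map_sub]
      simp only [LinearMap.sub_apply, inner_sub_right]
      rw [← hAB, ← hBA, toEL_mul, toEL_mul, ← hTAe, ← hTBe]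
    have hTA : TA ψ = φA + (a : ℂ) • ψ := by rw [hφA]; abel
    have hTB : TB ψ = φB + (b : ℂ) • ψ := by rw [hφB]; abel
    have e1 : (inner ℂ (TA ψ) (TB ψ) : ℂ) = z + (starRingEnd ℂ) ((a : ℝ) : ℂ) * (b : ℂ) := by
      rw [hTA, hTB]
      simp only [inner_add_left, inner_add_right, inner_smul_left, inner_smul_right,
        hψφB, hφAψ, hψψ, ← hz]
      ring
    have e2 : (inner ℂ (TB ψ) (TA ψ) : ℂ)
        = (starRingEnd ℂ) z + (starRingEnd ℂ) ((b : ℝ) : ℂ) * (a : ℂ) := by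
      have hzc : (inner ℂ φB φA : ℂ) = (starRingEnd ℂ) z := by
        rw [← inner_conj_symm, ← hz]
      rw [hTA, hTB]
      simp only [inner_add_left, inner_add_right, inner_smul_left, inner_smul_right,
        hψφA, hφBψ, hψψ, hzc]
      ring
    rw [← hIC, hsub, e1, e2]
    simp only [Complex.conj_ofReal]
    ring
  have habs : ‖(inner ℂ ψ (Matrix.toEuclideanLin C ψ) : ℂ)‖ = 2 * |z.im| := by
    have h5 := congrArg (‖·‖) hcomm
    rw [norm_mul, Complex.norm_I, one_mul] at h5
    rw [h5, Complex.sub_conj]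
    rw [norm_mul, Complex.norm_real, Complex.norm_I, mul_one, Real.norm_eq_abs, abs_mul]
    norm_num
  have hCS : ‖z‖ ≤ ‖φA‖ * ‖φB‖ := by
    have h6 := norm_inner_le_norm (𝕜 := ℂ) φA φB
    simpa [← hz] using h6
  have him : |z.im| ≤ ‖z‖ := Complex.abs_im_le_norm z
  rw [hsA, hsB, ge_iff_le, habs]
  linarith
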